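/- arXiv:1904.00033 — 2 statements merged into one kernel-verified Lean document; each statement's English description precedes it below -/
import Mathlib

section
/- Let R be a regular S-graded ring such that S satisfies condition (Δ). Then every homogeneous element of the graded Brown–McCoy radical 𝒢(R) is G-regular, and 𝒢(R) contains every homogeneous ideal of R all of whose homogeneous elements are G-regular. -/
/-!
Common framework: S-graded rings (rings that are direct sums of additive
subgroups indexed by a set S, with homogeneous products homogeneous),
homogeneous ideals, graded modules, and the various Brown--McCoy radicals.
-/

universe u v w

/-- An `S`-graded ring structure on a (not necessarily unital or commutative)
associative ring `R`: a family of additive subgroups indexed by a nonempty set `S`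
whose internal direct sum is `R`, such that whenever `R_s · R_t ≠ 0` there is
`u ∈ S` with `R_s · R_t ⊆ R_u`. -/
structure SGraded (S : Type v) (R : Type w) [NonUnitalRing R] where
  component : S → AddSubgroup R
  nonemptyS : Nonempty S
  independent : iSupIndep component
  iSup_eq_top : (⨆ s, component s) = ⊤
  mul_cond : ∀ s t : S, (∃ a ∈ component s, ∃ b ∈ component t, a * b ≠ 0) →
    ∃ u : S, ∀ a ∈ component s, ∀ b ∈ component t, a * b ∈ component u

namespace SGraded

variable {S : Type v} {R : Type w} [NonUnitalRing R] (G : SGraded S R)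

/-- A homogeneous element. -/
def Homog (a : R) : Prop := ∃ s, a ∈ G.component s

/-- The homogeneous part `A = ⋃ s, R_s` of `R`. -/
def homogPart : Set R := {a : R | G.Homog a}

/-- Two homogeneous elements are addable if one is `0` or they have the same degree. -/
def Addable (a b : R) : Prop := a = 0 ∨ b = 0 ∨ ∃ s, a ∈ G.component s ∧ b ∈ G.component s

/-- `ε ∈ S` is idempotent: `R_ε · R_ε ≠ 0` and `R_ε · R_ε ⊆ R_ε`. -/
def IsIdem (ε : S) : Prop :=
  (∃ a ∈ G.component ε, ∃ b ∈ G.component ε, a * b ≠ 0) ∧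
  ∀ a ∈ G.component ε, ∀ b ∈ G.component ε, a * b ∈ G.component ε

/-- Condition (Δ): the product of two nonidempotent degrees is never idempotent. -/
def CondDelta : Prop := ∀ s t u : S,
  (∃ a ∈ G.component s, ∃ b ∈ G.component t, a * b ≠ 0) →
  (∀ a ∈ G.component s, ∀ b ∈ G.component t, a * b ∈ G.component u) →
  ¬ G.IsIdem s → ¬ G.IsIdem t → ¬ G.IsIdem u

/-- Regularity (cancellativity) of the grading. -/
def Regular : Prop := ∀ a b c : R, G.Homog a → G.Homog b → G.Homog c →
  a ≠ 0 → b ≠ 0 → c ≠ 0 →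
  ((a * c ≠ 0 → b * c ≠ 0 → G.Addable (a * c) (b * c) → G.Addable a b) ∧
   (c * a ≠ 0 → c * b ≠ 0 → G.Addable (c * a) (c * b) → G.Addable a b))

end SGraded

section Rings

variable {R : Type w} [NonUnitalRing R]

/-- A right ideal of `R`, as an additive subgroup. -/
def IsRightIdeal (I : AddSubgroup R) : Prop := ∀ x ∈ I, ∀ r : R, x * r ∈ I

/-- A two-sided ideal of `R`, as an additive subgroup. -/
def IsTwoSidedIdeal' (I : AddSubgroup R) : Prop := ∀ x ∈ I, ∀ r : R, x * r ∈ I ∧ r * x ∈ I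

/-- The right ideal of `R` generated by a set. -/
def rightIdealGen (T : Set R) : AddSubgroup R :=
  sInf {I : AddSubgroup R | T ⊆ I ∧ IsRightIdeal I}

/-- A right ideal of the (sub)ring `E`, as an additive subgroup of `R` contained in `E`. -/
def IsRightIdealOn (E I : AddSubgroup R) : Prop := I ≤ E ∧ ∀ x ∈ I, ∀ r ∈ E, x * r ∈ I

/-- A two-sided ideal of the (sub)ring `E`. -/
def IsIdealOn (E I : AddSubgroup R) : Prop :=
  I ≤ E ∧ ∀ x ∈ I, ∀ r ∈ E, x * r ∈ I ∧ r * x ∈ I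

/-- The largest two-sided ideal of the (sub)ring `E` contained in `J`. -/
def coreOn (E J : AddSubgroup R) : AddSubgroup R :=
  sSup {K : AddSubgroup R | IsIdealOn E K ∧ K ≤ J}

/-- A maximal right ideal of the (sub)ring `E`. -/
def IsMaxRightIdealOn (E J : AddSubgroup R) : Prop :=
  IsRightIdealOn E J ∧ J ≠ E ∧ ∀ K : AddSubgroup R, IsRightIdealOn E K → J < K → K ≤ E → K = E

/-- A modular two-sided ideal of the (sub)ring `E`:
there is `e ∈ E` with `ea - a ∈ J` and `ae - a ∈ J` for all `a ∈ E`. -/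
def IsModularIdealOn (E J : AddSubgroup R) : Prop :=
  ∃ e ∈ E, ∀ a ∈ E, e * a - a ∈ J ∧ a * e - a ∈ J

/-- The classical Brown--McCoy radical of the (sub)ring `E`: the intersection of all
two-sided ideals `I` of `E` such that `E/I` is a simple ring with identity. -/
def brownMcCoyOn (E : AddSubgroup R) : Set R :=
  {a : R | a ∈ E ∧ ∀ I : AddSubgroup R, IsIdealOn E I → I ≠ E →
    IsModularIdealOn E I →
    (∀ K : AddSubgroup R, IsIdealOn E K → I ≤ K → K ≤ E → K = I ∨ K = E) → a ∈ I}

/-- `e` is a unity modulo `I`. -/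
def IsUnityMod (e : R) (I : AddSubgroup R) : Prop := ∀ a : R, e * a - a ∈ I ∧ a * e - a ∈ I

/-- `x` is a G-regular element of the (sub)ring `E`: there is no proper two-sided
ideal `I` of `E` such that `x` is a unity modulo `I`. -/
def GRegularOn (E : AddSubgroup R) (x : R) : Prop :=
  ∀ I : AddSubgroup R, IsIdealOn E I → I ≠ E →
    ¬ (∀ a ∈ E, x * a - a ∈ I ∧ a * x - a ∈ I)

end Rings

namespace SGraded

variable {S : Type v} {R : Type w} [NonUnitalRing R] (G : SGraded S R)

/-- An additive subgroup generated (as an additive group) by its homogeneous elements. -/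
def IsHomSubgroup (I : AddSubgroup R) : Prop :=
  I = AddSubgroup.closure {a : R | a ∈ I ∧ G.Homog a}

/-- A homogeneous right ideal of `R`. -/
def IsHomRightIdeal (I : AddSubgroup R) : Prop := IsRightIdeal I ∧ G.IsHomSubgroup I

/-- A homogeneous (two-sided) ideal of `R`. -/
def IsHomIdeal (I : AddSubgroup R) : Prop := IsTwoSidedIdeal' I ∧ G.IsHomSubgroup I

/-- `Ǐ`: the largest homogeneous ideal of `R` contained in `I`. -/
def core (I : AddSubgroup R) : AddSubgroup R :=
  sSup {J : AddSubgroup R | G.IsHomIdeal J ∧ J ≤ I}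

/-- A homogeneous right ideal, maximal among the proper homogeneous right ideals of `R`. -/
def IsMaxHomRightIdeal (I : AddSubgroup R) : Prop :=
  G.IsHomRightIdeal I ∧ I ≠ ⊤ ∧ ∀ K : AddSubgroup R, G.IsHomRightIdeal K → I < K → K = ⊤

/-- A modular homogeneous ideal of `R`: a homogeneous ideal admitting a homogeneous
unity modulo it. -/
def IsModularHomIdeal (I : AddSubgroup R) : Prop :=
  G.IsHomIdeal I ∧ ∃ e, G.Homog e ∧ IsUnityMod e I

/-- A homogeneous element is G-regular if it is a unity modulo no proper homogeneous
ideal of `R`. -/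
def GRegular (x : R) : Prop :=
  ∀ I : AddSubgroup R, G.IsHomIdeal I → I ≠ ⊤ → ¬ IsUnityMod x I

/-- The quotient graded ring `R/J` (graded by the images of the components) is a
regular simple graded ring whose identity is the image of a homogeneous element:
`R/J` is nonzero, regular, has an identity which is the image of a homogeneous
element of `R`, and has no homogeneous ideals other than `0` and `R/J`. -/
def QuotInM (J : AddSubgroup R) : Prop :=
  J ≠ ⊤ ∧
  (∃ e, G.Homog e ∧ IsUnityMod e J) ∧
  (∀ K : AddSubgroup R, G.IsHomIdeal K → J ≤ K → K = J ∨ K = ⊤) ∧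
  (∀ a b c : R, G.Homog a → G.Homog b → G.Homog c → a ∉ J → b ∉ J → c ∉ J →
    ((a * c ∉ J → b * c ∉ J → G.Addable (a * c) (b * c) → G.Addable a b) ∧
     (c * a ∉ J → c * b ∉ J → G.Addable (c * a) (c * b) → G.Addable a b)))

/-- The graded Brown--McCoy radical `𝒢(R)`: the intersection of all homogeneous right
ideals `I`, maximal among the proper homogeneous right ideals, such that `R/Ǐ` is a
regular simple graded ring with identity the image of a homogeneous element. -/
def gradedBM : Set R :=
  {a : R | ∀ I : AddSubgroup R, G.IsMaxHomRightIdeal I → G.QuotInM (G.core I) → a ∈ I}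

/-- The quotient right `R`-module `R/J` (graded by the images of the components) is a
graded-simple graded right `R`-module, phrased inside `R`. -/
def QuotGradedSimple (J : AddSubgroup R) : Prop :=
  (∃ x a : R, G.Homog x ∧ G.Homog a ∧ x * a ∉ J) ∧
  (∀ K : AddSubgroup R, G.IsHomRightIdeal K → J ≤ K → K = J ∨ K = ⊤) ∧
  (∀ I : AddSubgroup R, G.IsHomIdeal I → (∃ r : R, ∃ b ∈ I, r * b ∉ J) →
    ∃ b ∈ I, ∀ x : R, G.Homog x → x * b - x ∈ J)

end SGraded

/-- A graded right module over an `S`-graded ring `R`: a right `R`-module structure on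
an additive commutative group `M` together with a family of additive subgroups indexed
by a nonempty set `D` whose internal direct sum is `M` and with `M_d · R_s ⊆ M_t`. -/
structure GradedRightModule {S : Type v} {R : Type w} [NonUnitalRing R]
    (G : SGraded S R) (M : Type u) [AddCommGroup M] where
  smul : M → R → M
  add_smul : ∀ (x y : M) (a : R), smul (x + y) a = smul x a + smul y a
  smul_add : ∀ (x : M) (a b : R), smul x (a + b) = smul x a + smul x b
  smul_mul : ∀ (x : M) (a b : R), smul x (a * b) = smul (smul x a) b
  D : Type u
  nonemptyD : Nonempty D
  mcomp : D → AddSubgroup M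
  mindependent : iSupIndep mcomp
  miSup_eq_top : (⨆ d, mcomp d) = ⊤
  graded : ∀ (d : D) (s : S), ∃ t : D, ∀ x ∈ mcomp d, ∀ r ∈ G.component s, smul x r ∈ mcomp t

namespace GradedRightModule

variable {S : Type v} {R : Type w} [NonUnitalRing R] {G : SGraded S R}
  {M : Type u} [AddCommGroup M] (gm : GradedRightModule G M)

/-- A homogeneous element of `M`. -/
def HomogM (x : M) : Prop := ∃ d, x ∈ gm.mcomp d

/-- Addability of homogeneous elements of `M`. -/
def AddableM (x y : M) : Prop := x = 0 ∨ y = 0 ∨ ∃ d, x ∈ gm.mcomp d ∧ y ∈ gm.mcomp d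

/-- A homogeneous submodule of `M`: a submodule generated (as an additive group)
by its homogeneous elements. -/
def IsHomSubmodule (N : AddSubgroup M) : Prop :=
  (∀ x ∈ N, ∀ r : R, gm.smul x r ∈ N) ∧
  N = AddSubgroup.closure {x : M | x ∈ N ∧ gm.HomogM x}

/-- `M` is graded-irreducible. -/
def GradedIrreducible : Prop :=
  (∃ (x : M) (a : R), gm.HomogM x ∧ G.Homog a ∧ gm.smul x a ≠ 0) ∧
  ∀ N : AddSubgroup M, gm.IsHomSubmodule N → N = ⊥ ∨ N = ⊤

/-- `M` is graded-simple: graded-irreducible and for every homogeneous ideal `I` of `R`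
with `M·I ≠ 0` there is `b ∈ I` acting as identity on all homogeneous elements of `M`. -/
def GradedSimple : Prop :=
  gm.GradedIrreducible ∧
  ∀ I : AddSubgroup R, G.IsHomIdeal I → (∃ x : M, ∃ b ∈ I, gm.smul x b ≠ 0) →
    ∃ b ∈ I, ∀ x : M, gm.HomogM x → gm.smul x b = x

/-- `M` is a regular graded module. -/
def ModRegular : Prop :=
  ∀ (x : M) (a b : R), gm.HomogM x → G.Homog a → G.Homog b →
    gm.smul x a ≠ 0 → gm.smul x b ≠ 0 →
    gm.AddableM (gm.smul x a) (gm.smul x b) → G.Addable a b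

end GradedRightModule

/-- The large graded Brown--McCoy radical `G_l(R)`: the homogeneous elements
annihilating every graded-simple graded right `R`-module. -/
def largeGradedBM {S : Type v} {R : Type w} [NonUnitalRing R] (G : SGraded S R) : Set R :=
  {a : R | G.Homog a ∧ ∀ (M : Type u) [AddCommGroup M] (gm : GradedRightModule G M),
    gm.GradedSimple → ∀ x : M, gm.smul x a = 0}

variable {S : Type v} {R : Type w} [NonUnitalRing R]

section Ideals

theorem isRightIdeal_sSup {𝒮 : Set (AddSubgroup R)} (h : ∀ K ∈ 𝒮, IsRightIdeal K) :
    IsRightIdeal (sSup 𝒮) := fun _ hx r =>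
  (sSup_le fun K hK y hy => le_sSup hK (h K hK y hy r) :
    sSup 𝒮 ≤ (sSup 𝒮).comap (AddMonoidHom.mulRight r)) hx

theorem isTwoSidedIdeal'_sSup {𝒮 : Set (AddSubgroup R)} (h : ∀ K ∈ 𝒮, IsTwoSidedIdeal' K) :
    IsTwoSidedIdeal' (sSup 𝒮) := fun x hx r =>
  ⟨isRightIdeal_sSup (fun K hK y hy r => (h K hK y hy r).1) x hx r,
    (sSup_le fun K hK y hy => le_sSup hK (h K hK y hy r).2 :
      sSup 𝒮 ≤ (sSup 𝒮).comap (AddMonoidHom.mulLeft r)) hx⟩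

theorem IsUnityMod.mono {e : R} {I K : AddSubgroup R} (he : IsUnityMod e I) (hIK : I ≤ K) :
    IsUnityMod e K := fun a => ⟨hIK (he a).1, hIK (he a).2⟩

theorem IsUnityMod.eq_top_of_mem {e : R} {K : AddSubgroup R} (he : IsUnityMod e K)
    (hK : IsRightIdeal K) (heK : e ∈ K) : K = ⊤ :=
  K.eq_top_iff'.mpr fun a => by
    simpa using K.sub_mem (hK e heK a) (he a).1

theorem IsUnityMod.sub_of_mem {e c : R} {C : AddSubgroup R} (he : IsUnityMod e C)
    (hC : IsTwoSidedIdeal' C) (hc : c ∈ C) : IsUnityMod (e - c) C := fun a => by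
  constructor
  · rw [sub_mul, sub_right_comm]
    exact C.sub_mem (he a).1 (hC c hc a).1
  · rw [mul_sub, sub_right_comm]
    exact C.sub_mem (he a).2 (hC c hc a).2

theorem eq_or_eq_top_of_maximal_not_mem {P : AddSubgroup R → Prop}
    (hP : ∀ K, P K → IsRightIdeal K) {x : R} {J : AddSubgroup R} (hx : IsUnityMod x J)
    (hJ : Maximal (fun K => P K ∧ x ∉ K) J) {K : AddSubgroup R} (hK : P K) (hJK : J ≤ K) :
    K = J ∨ K = ⊤ := by
  by_cases hxK : x ∈ K
  · exact Or.inr ((hx.mono hJK).eq_top_of_mem (hP K hK) hxK)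
  · exact Or.inl (hJ.eq_of_ge ⟨hK, hxK⟩ hJK)

end Ideals

section Subgroups

variable {M : Type*}

theorem exists_maximal_not_mem [AddGroup M] {P : AddSubgroup M → Prop}
    (hP : ∀ 𝒮 : Set (AddSubgroup M), (∀ K ∈ 𝒮, P K) → P (sSup 𝒮))
    {I : AddSubgroup M} (hI : P I) {x : M} (hx : x ∉ I) :
    ∃ J, I ≤ J ∧ Maximal (fun K => P K ∧ x ∉ K) J := by
  refine zorn_le_nonempty₀ {K | P K ∧ x ∉ K} (fun c hc hchain K hK => ?_) I ⟨hI, hx⟩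
  refine ⟨sSup c, ⟨hP c fun K hK => (hc hK).1, fun hxc => ?_⟩, fun _ => le_sSup⟩
  obtain ⟨L, hL, hxL⟩ := (AddSubgroup.mem_sSup_of_directedOn ⟨K, hK⟩ hchain.directedOn).mp hxc
  exact (hc hL).2 hxL

theorem iSupIndep.mem_of_mem_iSup_of_le [AddCommGroup M] {ι : Type*}
    {C D : ι → AddSubgroup M} (hC : iSupIndep C) (hDC : ∀ t, D t ≤ C t) {s : ι} {x : M}
    (hxs : x ∈ C s) (hxD : x ∈ ⨆ t, D t) : x ∈ D s := by
  rw [iSup_split_single D s] at hxD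
  obtain ⟨y, hy, z, hz, rfl⟩ := AddSubgroup.mem_sup.mp hxD
  have hzs : z ∈ C s := by simpa using (C s).sub_mem hxs (hDC s hy)
  have hz : z ∈ ⨆ t, ⨆ (_ : t ≠ s), C t := iSup₂_mono (fun t _ => hDC t) hz
  rwa [AddSubgroup.disjoint_def.mp (hC s) hzs hz, add_zero]

end Subgroups

namespace SGraded

variable (G : SGraded S R)

theorem isHomSubgroup_sSup {𝒮 : Set (AddSubgroup R)} (h : ∀ K ∈ 𝒮, G.IsHomSubgroup K) :
    G.IsHomSubgroup (sSup 𝒮) := by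
  refine le_antisymm (sSup_le fun K hK => ?_) ?_
  · refine (h K hK).le.trans (AddSubgroup.closure_mono ?_)
    exact fun a ha => ⟨le_sSup hK ha.1, ha.2⟩
  · exact AddSubgroup.closure_le _ |>.mpr fun a ha => ha.1

theorem isHomIdeal_sSup {𝒮 : Set (AddSubgroup R)} (h : ∀ K ∈ 𝒮, G.IsHomIdeal K) :
    G.IsHomIdeal (sSup 𝒮) :=
  ⟨isTwoSidedIdeal'_sSup fun K hK => (h K hK).1, G.isHomSubgroup_sSup fun K hK => (h K hK).2⟩

theorem isHomRightIdeal_sSup {𝒮 : Set (AddSubgroup R)} (h : ∀ K ∈ 𝒮, G.IsHomRightIdeal K) :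
    G.IsHomRightIdeal (sSup 𝒮) :=
  ⟨isRightIdeal_sSup fun K hK => (h K hK).1, G.isHomSubgroup_sSup fun K hK => (h K hK).2⟩

theorem isHomIdeal_sup {P Q : AddSubgroup R} (hP : G.IsHomIdeal P) (hQ : G.IsHomIdeal Q) :
    G.IsHomIdeal (P ⊔ Q) := by
  rw [← sSup_pair]
  exact G.isHomIdeal_sSup (by rintro K (rfl | rfl) <;> assumption)

theorem core_isHomIdeal (J : AddSubgroup R) : G.IsHomIdeal (G.core J) :=
  G.isHomIdeal_sSup fun _ hK => hK.1

theorem core_le (J : AddSubgroup R) : G.core J ≤ J :=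
  sSup_le fun _ hK => hK.2

theorem le_core {I J : AddSubgroup R} (hI : G.IsHomIdeal I) (hIJ : I ≤ J) : I ≤ G.core J :=
  le_sSup ⟨hI, hIJ⟩

theorem mem_closure_inter_component {T : Set R} (hT : ∀ a ∈ T, G.Homog a) {s : S} {x : R}
    (hxs : x ∈ G.component s) (hxT : x ∈ AddSubgroup.closure T) :
    x ∈ AddSubgroup.closure {a ∈ T | a ∈ G.component s} := by
  refine G.independent.mem_of_mem_iSup_of_le
    (D := fun t => AddSubgroup.closure {a ∈ T | a ∈ G.component t})
    (fun t => AddSubgroup.closure_le _ |>.mpr fun a ha => ha.2) hxs ?_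
  refine (AddSubgroup.closure_le _ |>.mpr fun a ha => ?_) hxT
  obtain ⟨t, hat⟩ := hT a ha
  exact AddSubgroup.mem_iSup_of_mem t (AddSubgroup.subset_closure ⟨ha, hat⟩)

theorem mem_sup_inf_component {P Q : AddSubgroup R} (hP : G.IsHomSubgroup P)
    (hQ : G.IsHomSubgroup Q) {s : S} {x : R} (hxs : x ∈ G.component s) (hx : x ∈ P ⊔ Q) :
    x ∈ P ⊓ G.component s ⊔ Q ⊓ G.component s := by
  have hx' : x ∈ AddSubgroup.closure ({a | a ∈ P ∧ G.Homog a} ∪ {a | a ∈ Q ∧ G.Homog a}) := by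
    rwa [AddSubgroup.closure_union, ← hP, ← hQ]
  refine (AddSubgroup.closure_le _ |>.mpr ?_)
    (G.mem_closure_inter_component (by rintro a (ha | ha) <;> exact ha.2) hxs hx')
  rintro a ⟨ha | ha, has⟩
  · exact AddSubgroup.mem_sup_left ⟨ha.1, has⟩
  · exact AddSubgroup.mem_sup_right ⟨ha.1, has⟩

variable {G}

theorem IsHomIdeal.isHomRightIdeal {I : AddSubgroup R} (hI : G.IsHomIdeal I) :
    G.IsHomRightIdeal I :=
  ⟨fun x hx r => (hI.1 x hx r).1, hI.2⟩

/-- The regularity clause of `QuotInM`: elements outside `J` are nonzero. -/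
theorem Regular.mod (hreg : G.Regular) (J : AddSubgroup R) :
    ∀ a b c : R, G.Homog a → G.Homog b → G.Homog c → a ∉ J → b ∉ J → c ∉ J →
      ((a * c ∉ J → b * c ∉ J → G.Addable (a * c) (b * c) → G.Addable a b) ∧
       (c * a ∉ J → c * b ∉ J → G.Addable (c * a) (c * b) → G.Addable a b)) := by
  have ne_zero {y : R} (hy : y ∉ J) : y ≠ 0 := fun h => hy (h ▸ J.zero_mem)
  intro a b c ha hb hc haJ hbJ hcJ
  obtain ⟨hright, hleft⟩ := hreg a b c ha hb hc (ne_zero haJ) (ne_zero hbJ) (ne_zero hcJ)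
  exact ⟨fun hac hbc => hright (ne_zero hac) (ne_zero hbc),
    fun hca hcb => hleft (ne_zero hca) (ne_zero hcb)⟩

theorem isMaxHomRightIdeal_of_maximal {x : R} {J : AddSubgroup R} (hx : IsUnityMod x J)
    (hJ : Maximal (fun K => G.IsHomRightIdeal K ∧ x ∉ K) J) : G.IsMaxHomRightIdeal J := by
  refine ⟨hJ.1.1, fun h => hJ.1.2 (h ▸ AddSubgroup.mem_top x), fun K hK hJK => ?_⟩
  refine (eq_or_eq_top_of_maximal_not_mem (fun K hK => hK.1) hx hJ hK hJK.le).resolve_left ?_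
  exact hJK.ne'

theorem quotInM_of_maximal (hreg : G.Regular) {x : R} (hxh : G.Homog x) {M : AddSubgroup R}
    (hx : IsUnityMod x M) (hM : Maximal (fun K => G.IsHomIdeal K ∧ x ∉ K) M) :
    G.QuotInM M :=
  ⟨fun h => hM.1.2 (h ▸ AddSubgroup.mem_top x), ⟨x, hxh, hx⟩,
    fun _ hK hMK =>
      eq_or_eq_top_of_maximal_not_mem (fun _ hK => hK.isHomRightIdeal.1) hx hM hK hMK,
    hreg.mod M⟩

/-- If `x` is a unity modulo a proper homogeneous ideal, enlarge that ideal to a homogeneous ideal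
`M` maximal avoiding `x`, and `M` to a homogeneous right ideal `J` maximal avoiding `x`; then
`Ǐ = M`, so `J` is one of the right ideals cut out in `𝒢(R)`, and `x ∉ J`. -/
theorem gRegular_of_mem_gradedBM (hreg : G.Regular) {x : R} (hx : x ∈ G.gradedBM)
    (hxh : G.Homog x) : G.GRegular x := by
  intro I hI hItop hxI
  have hxI' : x ∉ I := fun h => hItop (hxI.eq_top_of_mem hI.isHomRightIdeal.1 h)
  obtain ⟨M, hIM, hM⟩ := exists_maximal_not_mem (fun _ => G.isHomIdeal_sSup) hI hxI'
  obtain ⟨J, hMJ, hJ⟩ := exists_maximal_not_mem (fun _ => G.isHomRightIdeal_sSup)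
    hM.1.1.isHomRightIdeal hM.1.2
  have hxM := hxI.mono hIM
  have hcore : G.core J = M :=
    hM.eq_of_ge ⟨G.core_isHomIdeal J, fun h => hJ.1.2 (G.core_le J h)⟩ (G.le_core hM.1.1 hMJ)
  refine hJ.1.2 (hx J (isMaxHomRightIdeal_of_maximal (hxM.mono hMJ) hJ) ?_)
  exact hcore ▸ quotInM_of_maximal hreg hxh hxM hM

/-- By simplicity of `R/Ǐ`, either `Ǐ + I = Ǐ` or `Ǐ + I = R`. In the latter case a homogeneous
`e` whose image is the identity of `R/Ǐ` splits, degree by degree, as `c + b` with `c ∈ Ǐ` and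
`b ∈ I` homogeneous; then `b` is a unity modulo the proper homogeneous ideal `Ǐ`. -/
theorem subset_gradedBM_of_forall_gRegular {I : AddSubgroup R} (hI : G.IsHomIdeal I)
    (hGR : ∀ x ∈ I, G.Homog x → G.GRegular x) : (I : Set R) ⊆ G.gradedBM := by
  rintro a ha J - ⟨hCtop, ⟨e, ⟨s, hes⟩, he⟩, hsimple, -⟩
  have hC := G.core_isHomIdeal J
  rcases hsimple _ (G.isHomIdeal_sup hC hI) le_sup_left with h | h
  · exact G.core_le J (h ▸ AddSubgroup.mem_sup_right ha)
  · obtain ⟨c, hc, b, hb, hcb⟩ := AddSubgroup.mem_sup.mp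
      (G.mem_sup_inf_component hC.2 hI.2 hes (h ▸ AddSubgroup.mem_top e))
    refine absurd ?_ (hGR b hb.1 ⟨s, hb.2⟩ _ hC hCtop)
    rw [eq_sub_of_add_eq' hcb]
    exact he.sub_of_mem hC.1 hc.1

end SGraded

theorem gradedBM_gRegular_and_contains_general (G : SGraded S R) (hreg : G.Regular) :
    (∀ x ∈ G.gradedBM, G.Homog x → G.GRegular x) ∧
    ∀ I : AddSubgroup R, G.IsHomIdeal I → (∀ x ∈ I, G.Homog x → G.GRegular x) →
      (I : Set R) ⊆ G.gradedBM :=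
  ⟨fun _ hx hxh => G.gRegular_of_mem_gradedBM hreg hx hxh,
    fun _ hI hGR => G.subset_gradedBM_of_forall_gRegular hI hGR⟩

/-- For a regular `S`-graded ring satisfying condition (Δ), every
homogeneous element of `𝒢(R)` is G-regular, and `𝒢(R)` contains every homogeneous
ideal all of whose homogeneous elements are G-regular. -/
theorem gradedBM_gRegular_and_contains (G : SGraded S R) (hreg : G.Regular)
    (hdelta : G.CondDelta) :
    (∀ x ∈ G.gradedBM, G.Homog x → G.GRegular x) ∧
    ∀ I : AddSubgroup R, G.IsHomIdeal I → (∀ x ∈ I, G.Homog x → G.GRegular x) →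
      (I : Set R) ⊆ G.gradedBM :=
  gradedBM_gRegular_and_contains_general G hreg
end

section
/- Let R be a regular S-graded ring and let I be a proper modular homogeneous ideal of R. If e and e' are both unities modulo I, then e and e' are addable, i.e., they have the same degree δ(e) = δ(e'), and this common degree is an idempotent element of S. -/
/-!
Common framework: S-graded rings (rings that are direct sums of additive
subgroups indexed by a set S, with homogeneous products homogeneous),
homogeneous ideals, graded modules, and the various Brown--McCoy radicals.
-/

universe u v w

variable {S : Type v} {R : Type w} [NonUnitalRing R]

/-!
Let `e` be a homogeneous unity modulo a proper homogeneous ideal `I`, and `a ∉ I` homogeneous.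
Since a homogeneous ideal contains the homogeneous components of its elements, `ea ≡ a (mod I)`
forces `ea` to have the degree of `a`. Hence `ee'` and `e'e'` are nonzero of degree `δ(e')`, so
`δ(e')` is idempotent, and regularity cancels `e'` in `ee'`, `e'e'` to give `δ(e) = δ(e')`.
-/

theorem IsUnityMod.notMem {I : AddSubgroup R} (hI : IsTwoSidedIdeal' I) (hproper : I ≠ ⊤)
    {e : R} (he : IsUnityMod e I) : e ∉ I := fun heI =>
  hproper <| (AddSubgroup.eq_top_iff' I).mpr fun a => by
    simpa using I.sub_mem (hI e heI a).1 (he a).1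

theorem IsUnityMod.mul_notMem {I : AddSubgroup R} {e a : R} (he : IsUnityMod e I)
    (ha : a ∉ I) : e * a ∉ I := fun heaI =>
  ha <| by simpa using I.sub_mem heaI (he a).1

namespace SGraded

variable (G : SGraded S R)

theorem isInternal [DecidableEq S] :
    DirectSum.IsInternal fun s => (G.component s).toIntSubmodule :=
  DirectSum.isInternal_submodule_of_iSupIndep_of_iSup_eq_top
    (G.independent.map_orderIso AddSubgroup.toIntSubmodule)
    (by rw [← AddSubgroup.toIntSubmodule.map_iSup, G.iSup_eq_top]; rfl)

noncomputable def proj [DecidableEq S] (t : S) : R →+ R :=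
  ((G.component t).toIntSubmodule.subtype ∘ₗ
    DirectSum.component ℤ S (fun s => (G.component s).toIntSubmodule) t ∘ₗ
    (LinearEquiv.ofBijective (DirectSum.coeLinearMap _) G.isInternal).symm.toLinearMap
    ).toAddMonoidHom

variable {G}

theorem proj_apply_of_mem [DecidableEq S] {t : S} {x : R} (hx : x ∈ G.component t) :
    G.proj t x = x := by
  simp [proj, ← DirectSum.apply_eq_component, G.isInternal.ofBijective_coeLinearMap_of_mem hx]

theorem proj_apply_of_mem_of_ne [DecidableEq S] {u t : S} (hut : u ≠ t) {x : R}
    (hx : x ∈ G.component u) : G.proj t x = 0 := by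
  simp [proj, ← DirectSum.apply_eq_component,
    G.isInternal.ofBijective_coeLinearMap_of_mem_ne hut hx]

theorem eq_of_mem_component {a : R} {u t : S} (hu : a ∈ G.component u)
    (ht : a ∈ G.component t) (ha : a ≠ 0) : u = t := by
  by_contra hne
  exact ha ((AddSubgroup.disjoint_def.mp (G.independent.pairwiseDisjoint hne)) hu ht)

theorem IsHomSubgroup.proj_mem [DecidableEq S] {I : AddSubgroup R} (hI : G.IsHomSubgroup I)
    (t : S) {z : R} (hz : z ∈ I) : G.proj t z ∈ I := by
  rw [hI] at hz
  induction hz using AddSubgroup.closure_induction with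
  | mem a ha =>
    obtain ⟨haI, v, hav⟩ := ha
    by_cases hvt : v = t
    · rwa [proj_apply_of_mem (hvt ▸ hav)]
    · rw [proj_apply_of_mem_of_ne hvt hav]
      exact I.zero_mem
  | zero => simp
  | add x y _ _ hx hy => simpa using I.add_mem hx hy
  | neg x _ hx => simpa using I.neg_mem hx

theorem IsHomSubgroup.mem_of_sub_mem {I : AddSubgroup R} (hI : G.IsHomSubgroup I)
    {u t : S} (hut : u ≠ t) {x y : R} (hx : x ∈ G.component u) (hy : y ∈ G.component t)
    (hxy : x - y ∈ I) : y ∈ I := by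
  classical
  have := hI.proj_mem t hxy
  rw [map_sub, proj_apply_of_mem_of_ne hut hx, proj_apply_of_mem hy, zero_sub] at this
  simpa using I.neg_mem this

theorem isIdem_of_mul_self_mem {a : R} {t : S} (ha : a ∈ G.component t) (haa : a * a ≠ 0)
    (haa_mem : a * a ∈ G.component t) : G.IsIdem t := by
  refine ⟨⟨a, ha, a, ha, haa⟩, ?_⟩
  obtain ⟨u, hu⟩ := G.mul_cond t t ⟨a, ha, a, ha, haa⟩
  rwa [eq_of_mem_component (hu a ha a ha) haa_mem haa] at hu

theorem mem_component_of_addable {a b : R} {t : S} (hab : G.Addable a b) (ha : a ≠ 0)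
    (hb : b ≠ 0) (hbt : b ∈ G.component t) : a ∈ G.component t := by
  obtain ha0 | hb0 | ⟨v, hav, hbv⟩ := hab
  · exact absurd ha0 ha
  · exact absurd hb0 hb
  · rwa [← eq_of_mem_component hbv hbt hb]

theorem IsHomSubgroup.mul_mem_component_of_isUnityMod {I : AddSubgroup R}
    (hI : G.IsHomSubgroup I) {e a : R} {s t : S} (hu : IsUnityMod e I)
    (he : e ∈ G.component s) (ha : a ∈ G.component t) (haI : a ∉ I) :
    e * a ∈ G.component t := by
  have hea : e * a ≠ 0 := fun h => hu.mul_notMem haI (h ▸ I.zero_mem)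
  obtain ⟨u, hmul⟩ := G.mul_cond s t ⟨e, he, a, ha, hea⟩
  by_cases hut : u = t
  · exact hut ▸ hmul e he a ha
  · exact absurd (hI.mem_of_sub_mem hut (hmul e he a ha) ha (hu a).1) haI

end SGraded

/-- In a regular `S`-graded ring, any two homogeneous unities
modulo a proper modular homogeneous ideal `I` are addable, i.e. have the same degree,
and this common degree is idempotent. -/
theorem unitiesMod_addable (G : SGraded S R) (hreg : G.Regular) (I : AddSubgroup R)
    (hI : G.IsHomIdeal I) (hproper : I ≠ ⊤)
    (e e' : R) (he : G.Homog e) (he' : G.Homog e')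
    (hu : IsUnityMod e I) (hu' : IsUnityMod e' I) :
    G.Addable e e' ∧ ∃ s : S, e ∈ G.component s ∧ e' ∈ G.component s ∧ G.IsIdem s := by
  obtain ⟨hIdeal, hHom⟩ := hI
  obtain ⟨s, hes⟩ := he
  obtain ⟨t, he't⟩ := he'
  have heI : e ∉ I := hu.notMem hIdeal hproper
  have he'I : e' ∉ I := hu'.notMem hIdeal hproper
  have hne : e ≠ 0 := fun h => heI (h ▸ I.zero_mem)
  have hne' : e' ≠ 0 := fun h => he'I (h ▸ I.zero_mem)
  have hee' : e * e' ≠ 0 := fun h => hu.mul_notMem he'I (h ▸ I.zero_mem)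
  have he'e' : e' * e' ≠ 0 := fun h => hu'.mul_notMem he'I (h ▸ I.zero_mem)
  have hee't := hHom.mul_mem_component_of_isUnityMod hu hes he't he'I
  have he'e't := hHom.mul_mem_component_of_isUnityMod hu' he't he't he'I
  have hadd : G.Addable e e' :=
    (hreg e e' e' ⟨s, hes⟩ ⟨t, he't⟩ ⟨t, he't⟩ hne hne' hne').1 hee' he'e'
      (Or.inr (Or.inr ⟨t, hee't, he'e't⟩))
  exact ⟨hadd, t, SGraded.mem_component_of_addable hadd hne hne' he't, he't,
    SGraded.isIdem_of_mul_self_mem he't he'e' he'e't⟩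
end
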